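/- arXiv:2212.11752 — 3 statements merged into one kernel-verified Lean document; each statement's English description precedes it below -/
import Mathlib

section
/- Let (Ω, F, P) be a probability space, p ∈ [1, ∞], and let ρ1, ρ2 : L^p(Ω, F, P) → ℝ be convex risk measures. Fix X ∈ L^p and assume there exist nondecreasing functions f1, f2 : ℝ → ℝ with f1 + f2 = Id such that ρ1 □ ρ2(X) = ρ1(f1(X)) + ρ2(f2(X)). Then there exists f ∈ A^0_Lip such that ρ1 □ ρ2(X) = ρ1(f(X)) + ρ2(X − f(X)); in particular, ρ1 □ ρ2(X) = min{ρ1(f(X)) + ρ2(X − f(X)) : f ∈ A^0_Lip} and the minimum is attained. -/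
open MeasureTheory Filter Topology
open scoped ENNReal NNReal

/-- The set `A⁰_Lip` of normalized Lipschitz allocations: functions `f : ℝ → ℝ`
with `f 0 = 0` such that both `f` and `Id - f` are 1-Lipschitz. -/
def IsA0Lip (f : ℝ → ℝ) : Prop :=
  f 0 = 0 ∧ LipschitzWith 1 f ∧ LipschitzWith 1 (fun x => x - f x)

/-- A (law-determined) convex risk measure on `L^p(Ω, F, P)`, viewed as a functional on
functions which factors through a.e. equality. -/
structure IsConvexRiskMeasure {Ω : Type*} [MeasurableSpace Ω] (μ : MeasureTheory.Measure Ω)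
    (p : ℝ≥0∞) (ρ : (Ω → ℝ) → ℝ) : Prop where
  congr : ∀ X Y : Ω → ℝ, X =ᵐ[μ] Y → ρ X = ρ Y
  normalized : ρ (fun _ => 0) = 0
  monotone : ∀ X Y : Ω → ℝ, MemLp X p μ → MemLp Y p μ →
    (∀ᵐ ω ∂μ, Y ω ≤ X ω) → ρ X ≤ ρ Y
  cashAdditive : ∀ X : Ω → ℝ, MemLp X p μ → ∀ c : ℝ,
    ρ (fun ω => X ω + c) = ρ X - c
  convex : ∀ X Y : Ω → ℝ, MemLp X p μ → MemLp Y p μ → ∀ l : ℝ, 0 ≤ l → l ≤ 1 →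
    ρ (fun ω => l * X ω + (1 - l) * Y ω) ≤ l * ρ X + (1 - l) * ρ Y

/-- The set of values `ρ1 X1 + ρ2 X2` over all allocations `X1 + X2 = X` in `L^p`;
its infimum is the inf-convolution `ρ1 □ ρ2 (X)`. -/
def allocValues {Ω : Type*} [MeasurableSpace Ω] (μ : MeasureTheory.Measure Ω) (p : ℝ≥0∞)
    (ρ1 ρ2 : (Ω → ℝ) → ℝ) (X : Ω → ℝ) : Set ℝ :=
  {r | ∃ X1 X2 : Ω → ℝ, MemLp X1 p μ ∧ MemLp X2 p μ ∧ (X1 + X2 =ᵐ[μ] X) ∧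
    r = ρ1 X1 + ρ2 X2}

/-!
A comonotone allocation `(f1(X), f2(X))` with `f1 + f2 = Id` has both `f1` and `f2 = Id - f1`
nondecreasing, which forces `f1` to be 1-Lipschitz. Shifting `f1` by the constant `f1 0`
normalizes it into `A⁰_Lip`; by cash additivity the two agents' risks change by opposite
amounts, so the total is unchanged. Every `g ∈ A⁰_Lip` yields an admissible allocation
`(g(X), X - g(X))`, so the optimal value is a lower bound for all of them.
-/

lemma LipschitzWith.of_monotone_of_monotone_id_sub {f : ℝ → ℝ} (hf : Monotone f)
    (hf' : Monotone fun x => x - f x) : LipschitzWith 1 f := by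
  refine LipschitzWith.of_le_add fun x y => ?_
  rw [Real.dist_eq]
  rcases le_total x y with hxy | hyx
  · linarith [hf hxy, abs_nonneg (x - y)]
  · linarith [hf' hyx, le_abs_self (x - y)]

lemma isA0Lip_of_monotone {f : ℝ → ℝ} (h0 : f 0 = 0) (hf : Monotone f)
    (hf' : Monotone fun x => x - f x) : IsA0Lip f :=
  ⟨h0, .of_monotone_of_monotone_id_sub hf hf',
    .of_monotone_of_monotone_id_sub hf' (by simpa using hf)⟩

namespace IsA0Lip

variable {f : ℝ → ℝ}

lemma id_sub (hf : IsA0Lip f) : IsA0Lip fun x => x - f x :=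
  ⟨by simp [hf.1], hf.2.2, by simpa using hf.2.1⟩

lemma abs_le (hf : IsA0Lip f) (x : ℝ) : |f x| ≤ |x| := by
  simpa [Real.dist_eq, hf.1] using hf.2.1.dist_le_mul x 0

lemma memLp_comp {Ω : Type*} [MeasurableSpace Ω] {μ : Measure Ω} {p : ℝ≥0∞}
    (hf : IsA0Lip f) {X : Ω → ℝ} (hX : MemLp X p μ) : MemLp (f ∘ X) p μ :=
  hX.of_le (hf.2.1.continuous.comp_aestronglyMeasurable hX.1) <|
    .of_forall fun ω => by simpa [Real.norm_eq_abs] using hf.abs_le (X ω)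

lemma mem_allocValues {Ω : Type*} [MeasurableSpace Ω] {μ : Measure Ω} {p : ℝ≥0∞}
    (hf : IsA0Lip f) (ρ1 ρ2 : (Ω → ℝ) → ℝ) {X : Ω → ℝ} (hX : MemLp X p μ) :
    ρ1 (f ∘ X) + ρ2 (fun ω => X ω - f (X ω)) ∈ allocValues μ p ρ1 ρ2 X :=
  ⟨f ∘ X, _, hf.memLp_comp hX, hf.id_sub.memLp_comp hX,
    .of_forall fun ω => by simp, rfl⟩

end IsA0Lip

lemma IsConvexRiskMeasure.map_add_const_add_map_sub_const {Ω : Type*} [MeasurableSpace Ω]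
    {μ : Measure Ω} {p : ℝ≥0∞} {ρ1 ρ2 : (Ω → ℝ) → ℝ}
    (h1 : IsConvexRiskMeasure μ p ρ1) (h2 : IsConvexRiskMeasure μ p ρ2)
    {Y1 Y2 : Ω → ℝ} (hY1 : MemLp Y1 p μ) (hY2 : MemLp Y2 p μ) (c : ℝ) :
    ρ1 (fun ω => Y1 ω + c) + ρ2 (fun ω => Y2 ω - c) = ρ1 Y1 + ρ2 Y2 := by
  simp_rw [sub_eq_add_neg]
  rw [h1.cashAdditive Y1 hY1, h2.cashAdditive Y2 hY2]
  ring

theorem infConv_attained_on_A0Lip_general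
    {Ω : Type*} [MeasurableSpace Ω] (μ : MeasureTheory.Measure Ω)
    (p : ℝ≥0∞)
    (ρ1 ρ2 : (Ω → ℝ) → ℝ)
    (h1 : IsConvexRiskMeasure μ p ρ1) (h2 : IsConvexRiskMeasure μ p ρ2)
    (X : Ω → ℝ) (hX : MemLp X p μ)
    (f1 f2 : ℝ → ℝ) (hf1 : Monotone f1) (hf2 : Monotone f2)
    (hsum : ∀ x : ℝ, f1 x + f2 x = x)
    (hopt : IsGLB (allocValues μ p ρ1 ρ2 X) (ρ1 (f1 ∘ X) + ρ2 (f2 ∘ X))) :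
    ∃ f : ℝ → ℝ, IsA0Lip f ∧
      ρ1 (f ∘ X) + ρ2 (fun ω => X ω - f (X ω)) = ρ1 (f1 ∘ X) + ρ2 (f2 ∘ X) ∧
      ∀ g : ℝ → ℝ, IsA0Lip g →
        ρ1 (f1 ∘ X) + ρ2 (f2 ∘ X) ≤ ρ1 (g ∘ X) + ρ2 (fun ω => X ω - g (X ω)) := by
  set c := f1 0
  have hf : IsA0Lip fun x => f1 x - c :=
    isA0Lip_of_monotone (sub_self c) (fun x y hxy => by linarith [hf1 hxy])
      (fun x y hxy => by linarith [hf2 hxy, hsum x, hsum y])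
  refine ⟨_, hf, ?_, fun g hg => hopt.1 (hg.mem_allocValues ρ1 ρ2 hX)⟩
  have hshift := h1.map_add_const_add_map_sub_const h2 (hf.memLp_comp hX)
    (hf.id_sub.memLp_comp hX) c
  refine hshift.symm.trans ?_
  congr 2 <;> funext ω
  · simp
  · simp only [Function.comp_apply]
    linarith [hsum (X ω)]

/-- If the inf-convolution of two convex risk measures is attained at a comonotone
allocation `(f1(X), f2(X))` with `f1, f2` nondecreasing and `f1 + f2 = Id`, then it is
attained at some `f ∈ A⁰_Lip`, and it equals the (attained) minimum of
`ρ1(f(X)) + ρ2(X - f(X))` over `f ∈ A⁰_Lip`. -/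
theorem infConv_attained_on_A0Lip
    {Ω : Type*} [MeasurableSpace Ω] (μ : MeasureTheory.Measure Ω) [IsProbabilityMeasure μ]
    (p : ℝ≥0∞) (hp : 1 ≤ p)
    (ρ1 ρ2 : (Ω → ℝ) → ℝ)
    (h1 : IsConvexRiskMeasure μ p ρ1) (h2 : IsConvexRiskMeasure μ p ρ2)
    (X : Ω → ℝ) (hX : MemLp X p μ)
    (f1 f2 : ℝ → ℝ) (hf1 : Monotone f1) (hf2 : Monotone f2)
    (hsum : ∀ x : ℝ, f1 x + f2 x = x)
    (hopt : IsGLB (allocValues μ p ρ1 ρ2 X) (ρ1 (f1 ∘ X) + ρ2 (f2 ∘ X))) :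
    ∃ f : ℝ → ℝ, IsA0Lip f ∧
      ρ1 (f ∘ X) + ρ2 (fun ω => X ω - f (X ω)) = ρ1 (f1 ∘ X) + ρ2 (f2 ∘ X) ∧
      ∀ g : ℝ → ℝ, IsA0Lip g →
        ρ1 (f1 ∘ X) + ρ2 (f2 ∘ X) ≤ ρ1 (g ∘ X) + ρ2 (fun ω => X ω - g (X ω)) :=
  infConv_attained_on_A0Lip_general μ p ρ1 ρ2 h1 h2 X hX f1 f2 hf1 hf2 hsum hopt
end

section
/- Let (Ω, F, P) be a probability space and let ρ1, ρ2 : L^∞(Ω, F, P) → ℝ be functionals continuous with respect to the essential supremum norm. Fix X ∈ L^∞ and assume there exists f̂ ∈ A^0_Lip with ρ1 □ ρ2(X) = ρ1(f̂(X)) + ρ2(X − f̂(X)). Fix ε > 0 and set r(x) := 1 + |x|^{1+ε}. Let S be a set of continuous functions g : ℝ → ℝ such that for every f ∈ A^0_Lip, inf_{g ∈ S} sup_{x ∈ ℝ} |f(x) − g(x)| / r(x) = 0. Then ρ1 □ ρ2(X) = inf{ρ1(g(X)) + ρ2(X − g(X)) : g ∈ S}. -/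
/-!
Choose `gₙ ∈ S` within weighted distance `1/(n+1)` of `f̂`. On a compact set the weight
`1 + |x|^{1+ε}` is bounded, so `gₙ → f̂` locally uniformly; since `X` is essentially bounded,
this gives `gₙ(X) → f̂(X)` and `X - gₙ(X) → X - f̂(X)` in `L^∞`, hence convergence of the values
`ρ1(gₙ(X)) + ρ2(X - gₙ(X))` to the optimal value. Conversely every `g ∈ S` yields an admissible
allocation, so no value falls below the inf-convolution.
-/

open MeasureTheory Filter Topology
open scoped ENNReal NNReal

/-- Sequential continuity of a functional with respect to the `L^∞` (essential sup) norm. -/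
def LinftySeqContinuous {Ω : Type*} [MeasurableSpace Ω] (μ : MeasureTheory.Measure Ω)
    (ρ : (Ω → ℝ) → ℝ) : Prop :=
  ∀ (Y : ℕ → Ω → ℝ) (Z : Ω → ℝ), (∀ n, MemLp (Y n) ∞ μ) → MemLp Z ∞ μ →
    Filter.Tendsto (fun n => eLpNorm (Y n - Z) ∞ μ) Filter.atTop (nhds 0) →
    Filter.Tendsto (fun n => ρ (Y n)) Filter.atTop (nhds (ρ Z))

/-- The set of values `ρ1 X1 + ρ2 X2` over all allocations `X1 + X2 = X` in `L^∞`;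
its infimum is the inf-convolution `ρ1 □ ρ2 (X)`. -/
def allocValuesInfty {Ω : Type*} [MeasurableSpace Ω] (μ : MeasureTheory.Measure Ω)
    (ρ1 ρ2 : (Ω → ℝ) → ℝ) (X : Ω → ℝ) : Set ℝ :=
  {r | ∃ X1 X2 : Ω → ℝ, MemLp X1 ∞ μ ∧ MemLp X2 ∞ μ ∧ (X1 + X2 =ᵐ[μ] X) ∧
    r = ρ1 X1 + ρ2 X2}

open Metric

section UniformConvergence

variable {ι α E : Type*} {l : Filter ι}

theorem TendstoLocallyUniformly.sub_left [TopologicalSpace α] [SeminormedAddCommGroup E]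
    {F : ι → α → E} {f : α → E} (φ : α → E) (h : TendstoLocallyUniformly F f l) :
    TendstoLocallyUniformly (fun i x => φ x - F i x) (fun x => φ x - f x) l := by
  rw [EMetric.tendstoLocallyUniformly_iff] at h ⊢
  simpa only [edist_sub_left] using h

theorem tendstoLocallyUniformly_of_weighted_dist_le {F : ι → ℝ → ℝ} {f : ℝ → ℝ} {p : ℝ}
    (hp : 0 ≤ p) {δ : ι → ℝ} (hδ : Tendsto δ l (𝓝 0))
    (h : ∀ i x, |f x - F i x| / (1 + |x| ^ p) ≤ δ i) :
    TendstoLocallyUniformly F f l := by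
  rw [tendstoLocallyUniformly_iff_forall_isCompact]
  intro K hK
  obtain ⟨C, hKC⟩ := hK.isBounded.subset_closedBall 0
  have hbound : ∀ i, ∀ x ∈ K, |f x - F i x| ≤ (1 + C ^ p) * δ i := by
    intro i x hx
    have hxC : |x| ≤ C := by simpa using hKC hx
    have hw : 0 < 1 + |x| ^ p := by positivity
    have hδi : 0 ≤ δ i := (div_nonneg (abs_nonneg _) hw.le).trans (h i x)
    calc |f x - F i x| ≤ (1 + |x| ^ p) * δ i := (div_le_iff₀' hw).1 (h i x)
      _ ≤ (1 + C ^ p) * δ i := by gcongr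
  have hδC : Tendsto (fun i => (1 + C ^ p) * δ i) l (𝓝 0) := by
    simpa using hδ.const_mul (1 + C ^ p)
  rw [Metric.tendstoUniformlyOn_iff]
  intro η hη
  filter_upwards [hδC.eventually (gt_mem_nhds hη)] with i hi x hx
  exact (Real.dist_eq _ _).trans_le (hbound i x hx) |>.trans_lt hi

end UniformConvergence

section EssentiallyBounded

variable {Ω E F : Type*} [MeasurableSpace Ω] {μ : Measure Ω}
  [NormedAddCommGroup E] [NormedAddCommGroup F]

theorem MeasureTheory.MemLp.ae_mem_closedBall_lpNorm_top {X : Ω → E} (hX : MemLp X ∞ μ) :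
    ∀ᵐ ω ∂μ, X ω ∈ closedBall 0 (lpNorm X ∞ μ) := by
  simpa only [mem_closedBall_zero_iff] using ae_le_lpNorm_exponent_top hX

theorem Continuous.comp_memLp_top [ProperSpace E] {g : E → F} (hg : Continuous g)
    {X : Ω → E} (hX : MemLp X ∞ μ) : MemLp (g ∘ X) ∞ μ := by
  obtain ⟨M, hM⟩ := (isCompact_closedBall (0 : E) (lpNorm X ∞ μ)).exists_bound_of_continuousOn
    hg.continuousOn
  exact memLp_top_of_bound (hg.comp_aestronglyMeasurable hX.1) M
    (hX.ae_mem_closedBall_lpNorm_top.mono fun ω hω => hM _ hω)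

theorem tendsto_eLpNorm_top_comp_sub_of_tendstoUniformlyOn {ι α : Type*} {l : Filter ι}
    {X : Ω → α} {K : Set α} (hXK : ∀ᵐ ω ∂μ, X ω ∈ K) {G : ι → α → F} {g : α → F}
    (h : TendstoUniformlyOn G g l K) :
    Tendsto (fun i => eLpNorm (G i ∘ X - g ∘ X) ∞ μ) l (𝓝 0) := by
  rw [ENNReal.tendsto_nhds_zero]
  intro η hη
  filter_upwards [EMetric.tendstoUniformlyOn_iff.1 h η hη] with i hi
  rw [eLpNorm_exponent_top]
  refine eLpNormEssSup_le_of_ae_enorm_bound (hXK.mono fun ω hω => ?_)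
  rw [Pi.sub_apply, ← edist_eq_enorm_sub, edist_comm]
  exact (hi _ hω).le

end EssentiallyBounded

section Allocations

variable {Ω : Type*} [MeasurableSpace Ω] {μ : Measure Ω}

theorem LinftySeqContinuous.tendsto_comp_of_tendstoLocallyUniformly
    {ρ : (Ω → ℝ) → ℝ} (hρ : LinftySeqContinuous μ ρ) {X : Ω → ℝ} (hX : MemLp X ∞ μ)
    {G : ℕ → ℝ → ℝ} {g : ℝ → ℝ} (hG : ∀ n, Continuous (G n)) (hg : Continuous g)
    (h : TendstoLocallyUniformly G g atTop) :
    Tendsto (fun n => ρ (G n ∘ X)) atTop (𝓝 (ρ (g ∘ X))) :=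
  hρ _ _ (fun n => (hG n).comp_memLp_top hX) (hg.comp_memLp_top hX)
    (tendsto_eLpNorm_top_comp_sub_of_tendstoUniformlyOn hX.ae_mem_closedBall_lpNorm_top
      (tendstoLocallyUniformly_iff_forall_isCompact.1 h _ (isCompact_closedBall _ _)))

theorem comp_mem_allocValuesInfty (ρ1 ρ2 : (Ω → ℝ) → ℝ) {X : Ω → ℝ} (hX : MemLp X ∞ μ)
    {g : ℝ → ℝ} (hg : Continuous g) :
    ρ1 (g ∘ X) + ρ2 (fun ω => X ω - g (X ω)) ∈ allocValuesInfty μ ρ1 ρ2 X :=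
  ⟨_, _, hg.comp_memLp_top hX, hX.sub (hg.comp_memLp_top hX),
    .of_forall fun ω => by simp, rfl⟩

end Allocations

theorem infConv_eq_inf_over_weighted_dense_family_general
    {Ω : Type*} [MeasurableSpace Ω] (μ : MeasureTheory.Measure Ω)
    (ρ1 ρ2 : (Ω → ℝ) → ℝ)
    (h1 : LinftySeqContinuous μ ρ1) (h2 : LinftySeqContinuous μ ρ2)
    (X : Ω → ℝ) (hX : MemLp X ∞ μ)
    (fhat : ℝ → ℝ) (hfhat : IsA0Lip fhat)
    (hopt : IsGLB (allocValuesInfty μ ρ1 ρ2 X)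
      (ρ1 (fhat ∘ X) + ρ2 (fun ω => X ω - fhat (X ω))))
    (ε : ℝ) (hε : 0 < ε)
    (S : Set (ℝ → ℝ))
    (hScont : ∀ g ∈ S, Continuous g)
    (hSdense : ∀ f : ℝ → ℝ, IsA0Lip f → ∀ δ : ℝ, 0 < δ →
      ∃ g ∈ S, ∀ x : ℝ, |f x - g x| / (1 + |x| ^ (1 + ε)) ≤ δ) :
    IsGLB {r : ℝ | ∃ g ∈ S, r = ρ1 (g ∘ X) + ρ2 (fun ω => X ω - g (X ω))}
      (ρ1 (fhat ∘ X) + ρ2 (fun ω => X ω - fhat (X ω))) := by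
  have hfhat_cont : Continuous fhat := hfhat.2.1.continuous
  refine ⟨?_, fun b hb => ?_⟩
  · rintro _ ⟨g, hgS, rfl⟩
    exact hopt.1 (comp_mem_allocValuesInfty ρ1 ρ2 hX (hScont g hgS))
  choose g hgS hg using
    fun n : ℕ => hSdense fhat hfhat (1 / (n + 1)) Nat.one_div_pos_of_nat
  have hg_cont : ∀ n, Continuous (g n) := fun n => hScont _ (hgS n)
  have hconv : TendstoLocallyUniformly g fhat atTop :=
    tendstoLocallyUniformly_of_weighted_dist_le (by linarith : 0 ≤ 1 + ε)
      tendsto_one_div_add_atTop_nhds_zero_nat hg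
  have hlim1 := h1.tendsto_comp_of_tendstoLocallyUniformly hX hg_cont hfhat_cont hconv
  have hlim2 := h2.tendsto_comp_of_tendstoLocallyUniformly hX
    (fun n => continuous_id.sub (hg_cont n)) (continuous_id.sub hfhat_cont) (hconv.sub_left id)
  exact ge_of_tendsto' (hlim1.add hlim2) fun n => hb ⟨g n, hgS n, rfl⟩

/-- If the inf-convolution of two `L^∞`-norm-continuous functionals is attained at some
`f̂ ∈ A⁰_Lip`, then it equals the infimum over any family `S` of continuous functions
which approximates `A⁰_Lip` in the weighted sup-norm with weight `r(x) = 1 + |x|^{1+ε}`.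
(Abstract form of the neural-network approximation theorem on `L^∞`.) -/
theorem infConv_eq_inf_over_weighted_dense_family
    {Ω : Type*} [MeasurableSpace Ω] (μ : MeasureTheory.Measure Ω) [IsProbabilityMeasure μ]
    (ρ1 ρ2 : (Ω → ℝ) → ℝ)
    (h1 : LinftySeqContinuous μ ρ1) (h2 : LinftySeqContinuous μ ρ2)
    (X : Ω → ℝ) (hX : MemLp X ∞ μ)
    (fhat : ℝ → ℝ) (hfhat : IsA0Lip fhat)
    (hopt : IsGLB (allocValuesInfty μ ρ1 ρ2 X)
      (ρ1 (fhat ∘ X) + ρ2 (fun ω => X ω - fhat (X ω))))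
    (ε : ℝ) (hε : 0 < ε)
    (S : Set (ℝ → ℝ))
    (hScont : ∀ g ∈ S, Continuous g)
    (hSdense : ∀ f : ℝ → ℝ, IsA0Lip f → ∀ δ : ℝ, 0 < δ →
      ∃ g ∈ S, ∀ x : ℝ, |f x - g x| / (1 + |x| ^ (1 + ε)) ≤ δ) :
    IsGLB {r : ℝ | ∃ g ∈ S, r = ρ1 (g ∘ X) + ρ2 (fun ω => X ω - g (X ω))}
      (ρ1 (fhat ∘ X) + ρ2 (fun ω => X ω - fhat (X ω))) :=
  infConv_eq_inf_over_weighted_dense_family_general μ ρ1 ρ2 h1 h2 X hX fhat hfhat hopt ε hε S hScont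
    hSdense
end

section
/- Let p ∈ [1, ∞) and let (Q_n)_{n≥1}, Q be Borel probability measures on ℝ with finite p-th moments, such that Q_n converges weakly to Q (∫ g dQ_n → ∫ g dQ for every bounded continuous g) and ∫ |x|^p dQ_n(x) → ∫ |x|^p dQ(x). Then there exist Borel measurable random variables (Y_n)_{n≥1} and Y on the probability space ([0,1], B([0,1]), Lebesgue) such that Y_n has law Q_n for every n, Y has law Q, and ∫_0^1 |Y_n(t) − Y(t)|^p dt → 0 as n → ∞ (i.e., Y_n → Y in L^p). -/
/-!
The coupling is the quantile one: `Y_n` and `Y` are the left-continuous inverses of the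
distribution functions of `Q_n` and `Q`, evaluated at a uniform point of `[0, 1]`. Weak
convergence gives convergence of the distribution functions at the continuity points of the limit,
hence convergence of the quantiles at every continuity point of the (monotone) limit quantile, i.e.
Lebesgue-almost everywhere. Since `|Y_n - Y|^p ≤ 2^p (|Y_n|^p + |Y|^p)` and the integrals of the
right-hand sides converge by the moment hypothesis, Fatou's lemma applied to the difference gives
`∫ |Y_n - Y|^p → 0`.
-/

open MeasureTheory Filter Topology Set ProbabilityTheory
open scoped ENNReal

theorem abs_sub_rpow_le {p : ℝ} (hp : 0 ≤ p) (a b : ℝ) :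
    |a - b| ^ p ≤ 2 ^ p * (|a| ^ p + |b| ^ p) := by
  have hmax : |a - b| ≤ 2 * max |a| |b| := by
    linarith [abs_sub a b, le_max_left |a| |b|, le_max_right |a| |b|]
  calc |a - b| ^ p ≤ (2 * max |a| |b|) ^ p := by gcongr
    _ = 2 ^ p * max |a| |b| ^ p := Real.mul_rpow zero_le_two (by positivity)
    _ ≤ 2 ^ p * (|a| ^ p + |b| ^ p) := by
      gcongr
      rcases le_total |a| |b| with h | h
      · rw [max_eq_right h]; exact le_add_of_nonneg_left (by positivity)
      · rw [max_eq_left h]; exact le_add_of_nonneg_right (by positivity)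

theorem Real.volume_Iic_inter_Ioo {a b c : ℝ} (hcb : c ≤ b) :
    volume (Iic c ∩ Ioo a b) = ENNReal.ofReal (c - a) := by
  rw [← Measure.restrict_apply' measurableSet_Ioo, Measure.restrict_congr_set Ioo_ae_eq_Ioc,
    Measure.restrict_apply' measurableSet_Ioc, Iic_inter_Ioc_of_le hcb, Real.volume_Ioc]

namespace MeasureTheory

variable {α : Type*} [MeasurableSpace α] {μ : Measure α}

/-- Pratt's lemma: dominated convergence with dominating functions whose integrals converge. -/
theorem tendsto_lintegral_zero_of_le_of_tendsto_lintegral {F G : ℕ → α → ℝ≥0∞} {g : α → ℝ≥0∞}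
    (hF : ∀ n, AEMeasurable (F n) μ) (hG : ∀ n, AEMeasurable (G n) μ)
    (hFG : ∀ n, F n ≤ᵐ[μ] G n)
    (hF_zero : ∀ᵐ a ∂μ, Tendsto (fun n => F n a) atTop (𝓝 0))
    (hG_lim : ∀ᵐ a ∂μ, Tendsto (fun n => G n a) atTop (𝓝 (g a)))
    (hG_int : Tendsto (fun n => ∫⁻ a, G n a ∂μ) atTop (𝓝 (∫⁻ a, g a ∂μ)))
    (hg : ∫⁻ a, g a ∂μ ≠ ∞) :
    Tendsto (fun n => ∫⁻ a, F n a ∂μ) atTop (𝓝 0) := by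
  have hfatou : ∫⁻ a, g a ∂μ ≤ liminf (fun n => ∫⁻ a, G n a - F n a ∂μ) atTop := by
    calc ∫⁻ a, g a ∂μ = ∫⁻ a, liminf (fun n => G n a - F n a) atTop ∂μ := by
          refine lintegral_congr_ae ?_
          filter_upwards [hF_zero, hG_lim] with a hFa hGa
          simpa using ((ENNReal.Tendsto.sub hGa hFa (Or.inr ENNReal.zero_ne_top)).liminf_eq).symm
      _ ≤ _ := lintegral_liminf_le' fun n => (hG n).sub (hF n)
  have hdiff : Tendsto (fun n => ∫⁻ a, G n a - F n a ∂μ) atTop (𝓝 (∫⁻ a, g a ∂μ)) := by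
    refine tendsto_of_le_liminf_of_limsup_le hfatou ?_
    calc limsup (fun n => ∫⁻ a, G n a - F n a ∂μ) atTop
        ≤ limsup (fun n => ∫⁻ a, G n a ∂μ) atTop :=
          limsup_le_limsup (Eventually.of_forall fun n => lintegral_mono fun a => tsub_le_self)
      _ = ∫⁻ a, g a ∂μ := hG_int.limsup_eq
  have hsub : ∀ᶠ n in atTop,
      ∫⁻ a, F n a ∂μ = ∫⁻ a, G n a ∂μ - ∫⁻ a, G n a - F n a ∂μ := by
    filter_upwards [hG_int.eventually (gt_mem_nhds hg.lt_top)] with n hGn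
    have hFG_int : ∫⁻ a, F n a ∂μ ≤ ∫⁻ a, G n a ∂μ := lintegral_mono_ae (hFG n)
    rw [lintegral_sub' (hF n) (ne_top_of_le_ne_top hGn.ne hFG_int) (hFG n),
      ENNReal.sub_sub_cancel hGn.ne hFG_int]
  simpa using (ENNReal.Tendsto.sub hG_int hdiff (Or.inl hg)).congr' (hsub.mono fun n h => h.symm)

theorem tendsto_integral_rpow_abs_sub_of_tendsto_ae {p : ℝ} (hp : 0 < p) {f : ℕ → α → ℝ}
    {g : α → ℝ} (hf : ∀ n, AEMeasurable (f n) μ) (hg : AEMeasurable g μ)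
    (hf_int : ∀ n, Integrable (fun a => |f n a| ^ p) μ)
    (hg_int : Integrable (fun a => |g a| ^ p) μ)
    (hfg : ∀ᵐ a ∂μ, Tendsto (fun n => f n a) atTop (𝓝 (g a)))
    (hmom : Tendsto (fun n => ∫ a, |f n a| ^ p ∂μ) atTop (𝓝 (∫ a, |g a| ^ p ∂μ))) :
    Tendsto (fun n => ∫ a, |f n a - g a| ^ p ∂μ) atTop (𝓝 0) := by
  have hpow : Continuous fun x : ℝ => |x| ^ p := continuous_abs.rpow_const fun _ => Or.inr hp.le
  set bound : (α → ℝ) → α → ℝ := fun h a => 2 ^ p * (|h a| ^ p + |g a| ^ p)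
  have hbound_int : ∀ h : α → ℝ, Integrable (fun a => |h a| ^ p) μ → Integrable (bound h) μ :=
    fun h hh => (hh.add hg_int).const_mul _
  have hbound_lintegral : ∀ h : α → ℝ, Integrable (fun a => |h a| ^ p) μ →
      ∫⁻ a, ENNReal.ofReal (bound h a) ∂μ = ENNReal.ofReal (∫ a, bound h a ∂μ) := fun h hh =>
    (ofReal_integral_eq_lintegral_ofReal (hbound_int h hh)
      (ae_of_all _ fun a => by positivity)).symm
  have hG_int : Tendsto (fun n => ∫⁻ a, ENNReal.ofReal (bound (f n) a) ∂μ) atTop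
      (𝓝 (∫⁻ a, ENNReal.ofReal (bound g a) ∂μ)) := by
    simp only [fun n => hbound_lintegral (f n) (hf_int n), hbound_lintegral g hg_int, bound,
      integral_const_mul, integral_add (hf_int _) hg_int, integral_add hg_int hg_int]
    exact ENNReal.tendsto_ofReal ((hmom.add_const _).const_mul _)
  have hF_zero : ∀ᵐ a ∂μ, Tendsto (fun n => ENNReal.ofReal (|f n a - g a| ^ p)) atTop (𝓝 0) := by
    filter_upwards [hfg] with a ha
    simpa [Function.comp_def, Real.zero_rpow hp.ne'] using
      (ENNReal.continuous_ofReal.comp hpow).continuousAt.tendsto.comp (ha.sub_const (g a))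
  have hG_lim : ∀ᵐ a ∂μ, Tendsto (fun n => ENNReal.ofReal (bound (f n) a)) atTop
      (𝓝 (ENNReal.ofReal (bound g a))) := by
    filter_upwards [hfg] with a ha
    exact ENNReal.tendsto_ofReal (((hpow.continuousAt.tendsto.comp ha).add_const _).const_mul _)
  have hlint_zero := tendsto_lintegral_zero_of_le_of_tendsto_lintegral
    (F := fun n a => ENNReal.ofReal (|f n a - g a| ^ p))
    (fun n => (hpow.measurable.comp_aemeasurable ((hf n).sub hg)).ennreal_ofReal)
    (fun n => ((hbound_int _ (hf_int n)).aemeasurable).ennreal_ofReal)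
    (fun n => ae_of_all _ fun a => ENNReal.ofReal_le_ofReal (abs_sub_rpow_le hp.le _ _))
    hF_zero hG_lim hG_int (hbound_lintegral g hg_int ▸ ENNReal.ofReal_ne_top)
  have hint : ∀ n, ∫ a, |f n a - g a| ^ p ∂μ =
      (∫⁻ a, ENNReal.ofReal (|f n a - g a| ^ p) ∂μ).toReal := fun n =>
    integral_eq_lintegral_of_nonneg_ae (ae_of_all _ fun a => by positivity)
      (hpow.comp_aestronglyMeasurable ((hf n).sub hg).aestronglyMeasurable)
  simpa only [hint, Function.comp_def, ENNReal.toReal_zero] using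
    (ENNReal.tendsto_toReal ENNReal.zero_ne_top).comp hlint_zero

end MeasureTheory

namespace ProbabilityTheory

/-- The left-continuous inverse of `cdf μ` on `(0, 1)`, extended by `0` outside `(0, 1)`. -/
noncomputable def quantile (μ : Measure ℝ) (t : ℝ) : ℝ :=
  if t ∈ Ioo 0 1 then sInf {x | t ≤ cdf μ x} else 0

variable (μ : Measure ℝ)

lemma nonempty_setOf_le_cdf {t : ℝ} (ht : t < 1) : {x | t ≤ cdf μ x}.Nonempty :=
  ((tendsto_cdf_atTop μ).eventually (eventually_ge_nhds ht)).exists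

lemma bddBelow_setOf_le_cdf {t : ℝ} (ht : 0 < t) : BddBelow {x | t ≤ cdf μ x} := by
  obtain ⟨z, hz⟩ := ((tendsto_cdf_atBot μ).eventually (eventually_lt_nhds ht)).exists
  exact ⟨z, fun y hy => le_of_not_ge fun hyz => (hy.trans (monotone_cdf μ hyz)).not_gt hz⟩

lemma quantile_le_iff {t : ℝ} (ht : t ∈ Ioo 0 1) (x : ℝ) : quantile μ t ≤ x ↔ t ≤ cdf μ x := by
  set S := {x | t ≤ cdf μ x}
  have hq : quantile μ t = sInf S := if_pos ht
  refine ⟨fun h => ?_, fun h => hq ▸ csInf_le (bddBelow_setOf_le_cdf μ ht.1) h⟩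
  suffices t ≤ cdf μ (sInf S) from this.trans (monotone_cdf μ (hq ▸ h))
  -- `S` is an up-set, so `t ≤ cdf μ` on `(sInf S, ∞)`; conclude by right-continuity of `cdf μ`.
  have hright : ∀ᶠ y in 𝓝[>] sInf S, t ≤ cdf μ y := by
    filter_upwards [self_mem_nhdsWithin] with y hy
    obtain ⟨s, hs, hsy⟩ := exists_lt_of_csInf_lt (nonempty_setOf_le_cdf μ ht.2) hy
    exact hs.trans (monotone_cdf μ hsy.le)
  exact ge_of_tendsto ((cdf μ).right_continuous _ |>.mono_left
    (nhdsWithin_mono _ Ioi_subset_Ici_self)) hright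

lemma le_cdf_quantile {t : ℝ} (ht : t ∈ Ioo 0 1) : t ≤ cdf μ (quantile μ t) :=
  (quantile_le_iff μ ht _).1 le_rfl

lemma monotoneOn_quantile : MonotoneOn (quantile μ) (Ioo 0 1) := fun _ hs _ ht hst =>
  (quantile_le_iff μ hs _).2 (hst.trans (le_cdf_quantile μ ht))

lemma countable_not_continuousAt_quantile :
    {t ∈ Ioo 0 1 | ¬ContinuousAt (quantile μ) t}.Countable := by
  refine (monotoneOn_quantile μ).countable_not_continuousWithinAt.mono ?_
  rintro t ⟨ht, hnc⟩
  exact ⟨ht, by rwa [continuousWithinAt_iff_continuousAt (Ioo_mem_nhds ht.1 ht.2)]⟩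

lemma preimage_quantile_Iic (x : ℝ) :
    quantile μ ⁻¹' Iic x = Iic (cdf μ x) ∩ Ioo 0 1 ∪ {_t | (0 : ℝ) ≤ x} \ Ioo 0 1 := by
  ext t
  by_cases ht : t ∈ Ioo 0 1
  · simp [ht, ← quantile_le_iff μ ht]
  · simp [ht, quantile]

lemma measurable_quantile : Measurable (quantile μ) := by
  refine measurable_of_Iic fun x => ?_
  rw [preimage_quantile_Iic]
  exact (measurableSet_Iic.inter measurableSet_Ioo).union
    ((MeasurableSet.const _).diff measurableSet_Ioo)

theorem map_quantile [IsProbabilityMeasure μ] :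
    (volume.restrict (Icc 0 1)).map (quantile μ) = μ := by
  refine (Measure.ext_of_Iic μ _ fun x => ?_).symm
  rw [Measure.map_apply (measurable_quantile μ) measurableSet_Iic,
    Measure.restrict_congr_set Ioo_ae_eq_Icc.symm, Measure.restrict_apply' measurableSet_Ioo,
    preimage_quantile_Iic, union_inter_distrib_right, inter_assoc, inter_self, sdiff_inter_self,
    union_empty, Real.volume_Iic_inter_Ioo (cdf_le_one μ x), sub_zero, ofReal_cdf]

lemma measure_singleton_eq_zero_of_continuousAt_cdf [IsProbabilityMeasure μ] {x : ℝ}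
    (hx : ContinuousAt (cdf μ) x) : μ {x} = 0 := by
  rw [← measure_cdf μ, StieltjesFunction.measure_singleton,
    leftLim_eq_of_tendsto (hx.tendsto.mono_left nhdsWithin_le_nhds), sub_self, ENNReal.ofReal_zero]

theorem tendsto_cdf_of_tendsto {ι : Type*} {l : Filter ι} {μs : ι → ProbabilityMeasure ℝ}
    {ν : ProbabilityMeasure ℝ} (h : Tendsto μs l (𝓝 ν)) {x : ℝ} (hx : ContinuousAt (cdf ν) x) :
    Tendsto (fun i => cdf (μs i) x) l (𝓝 (cdf ν x)) := by
  have hfrontier : (ν : Measure ℝ) (frontier (Iic x)) = 0 := by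
    rw [frontier_Iic]; exact measure_singleton_eq_zero_of_continuousAt_cdf _ hx
  simpa only [cdf_eq_real, measureReal_def, Function.comp_def] using
    (ENNReal.tendsto_toReal (measure_ne_top _ _)).comp
      (ProbabilityMeasure.tendsto_measure_of_null_frontier_of_tendsto' h hfrontier)

theorem tendsto_quantile_of_tendsto_cdf {ι : Type*} {l : Filter ι} {μs : ι → Measure ℝ}
    {ν : Measure ℝ}
    (hcdf : ∀ x, ContinuousAt (cdf ν) x → Tendsto (fun i => cdf (μs i) x) l (𝓝 (cdf ν x)))
    {t : ℝ} (ht : t ∈ Ioo 0 1) (hν : ContinuousAt (quantile ν) t) :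
    Tendsto (fun i => quantile (μs i) t) l (𝓝 (quantile ν t)) := by
  have hdense : Dense {x | ContinuousAt (cdf ν) x} := by
    simpa only [compl_ofPred, not_not] using
      (monotone_cdf ν).countable_not_continuousAt.dense_compl ℝ
  refine tendsto_order.2 ⟨fun c hc => ?_, fun b hb => ?_⟩
  · obtain ⟨x, hx, hcx, hxq⟩ := hdense.exists_between hc
    have hxt : cdf ν x < t := lt_of_not_ge fun h => hxq.not_ge ((quantile_le_iff ν ht x).2 h)
    filter_upwards [(hcdf x hx).eventually (eventually_lt_nhds hxt)] with i hi
    exact hcx.trans (lt_of_not_ge fun h => hi.not_ge ((quantile_le_iff (μs i) ht x).1 h))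
  · obtain ⟨t', ht'b, htt', ht'1⟩ := (((hν.eventually (eventually_lt_nhds hb)).filter_mono
      nhdsWithin_le_nhds).and (Ioo_mem_nhdsGT ht.2)).exists
    obtain ⟨x, hx, ht'x, hxb⟩ := hdense.exists_between ht'b
    have htx : t < cdf ν x :=
      htt'.trans_le ((quantile_le_iff ν ⟨ht.1.trans htt', ht'1⟩ x).1 ht'x.le)
    filter_upwards [(hcdf x hx).eventually (eventually_gt_nhds htx)] with i hi
    exact ((quantile_le_iff (μs i) ht x).2 hi.le).trans_lt hxb

theorem ae_tendsto_quantile {ι : Type*} {l : Filter ι} {μs : ι → Measure ℝ} {ν : Measure ℝ}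
    (hcdf : ∀ x, ContinuousAt (cdf ν) x → Tendsto (fun i => cdf (μs i) x) l (𝓝 (cdf ν x))) :
    ∀ᵐ t ∂volume.restrict (Icc 0 1), Tendsto (fun i => quantile (μs i) t) l (𝓝 (quantile ν t)) := by
  rw [Measure.restrict_congr_set Ioo_ae_eq_Icc.symm]
  filter_upwards [ae_restrict_mem measurableSet_Ioo,
    ae_restrict_of_ae ((countable_not_continuousAt_quantile ν).ae_notMem volume)] with t ht hcont
  exact tendsto_quantile_of_tendsto_cdf hcdf ht (not_not.1 fun h => hcont ⟨ht, h⟩)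

section

variable [IsProbabilityMeasure μ] {E : Type*} [NormedAddCommGroup E]

lemma _root_.MeasureTheory.Integrable.comp_quantile {f : ℝ → E} (hf : Integrable f μ) :
    Integrable (fun t => f (quantile μ t)) (volume.restrict (Icc 0 1)) := by
  rw [← map_quantile μ] at hf
  exact hf.comp_measurable (measurable_quantile μ)

lemma integral_comp_quantile [NormedSpace ℝ E] {f : ℝ → E} (hf : AEStronglyMeasurable f μ) :
    ∫ t in Icc 0 1, f (quantile μ t) = ∫ x, f x ∂μ := by
  rw [← map_quantile μ] at hf
  conv_rhs => rw [← map_quantile μ]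
  exact (integral_map (measurable_quantile μ).aemeasurable hf).symm

end

end ProbabilityTheory

/-- Skorokhod-type representation with `L^p` convergence: if probability measures `Q_n`
on `ℝ` with finite `p`-th moments converge weakly to `Q` and their `p`-th moments
converge to that of `Q` (equivalently, `W_p(Q_n, Q) → 0`), then on the probability space
`([0,1], B([0,1]), Leb)` there are random variables `Y_n ∼ Q_n`, `Y ∼ Q` with
`∫_0^1 |Y_n - Y|^p → 0`. -/
theorem skorokhod_Lp_representation
    (p : ℝ) (hp : 1 ≤ p)
    (Q : ℕ → MeasureTheory.Measure ℝ) (Qlim : MeasureTheory.Measure ℝ)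
    (hQn : ∀ n, IsProbabilityMeasure (Q n)) (hQ : IsProbabilityMeasure Qlim)
    (hQnmom : ∀ n, MeasureTheory.Integrable (fun x : ℝ => |x| ^ p) (Q n))
    (hQmom : MeasureTheory.Integrable (fun x : ℝ => |x| ^ p) Qlim)
    (hweak : ∀ g : ℝ → ℝ, Continuous g → (∃ M : ℝ, ∀ x : ℝ, |g x| ≤ M) →
      Filter.Tendsto (fun n => ∫ x, g x ∂(Q n)) Filter.atTop (nhds (∫ x, g x ∂Qlim)))
    (hmom : Filter.Tendsto (fun n => ∫ x, |x| ^ p ∂(Q n)) Filter.atTop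
      (nhds (∫ x, |x| ^ p ∂Qlim))) :
    ∃ (Y : ℕ → ℝ → ℝ) (Ylim : ℝ → ℝ),
      (∀ n, Measurable (Y n)) ∧ Measurable Ylim ∧
      (∀ n, MeasureTheory.Measure.map (Y n)
        (MeasureTheory.volume.restrict (Set.Icc (0 : ℝ) 1)) = Q n) ∧
      MeasureTheory.Measure.map Ylim
        (MeasureTheory.volume.restrict (Set.Icc (0 : ℝ) 1)) = Qlim ∧
      Filter.Tendsto
        (fun n => ∫ t in Set.Icc (0 : ℝ) 1, |Y n t - Ylim t| ^ p) Filter.atTop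
        (nhds 0) := by
  have hconv : Tendsto (β := ProbabilityMeasure ℝ) (fun n => ⟨Q n, hQn n⟩) atTop
      (𝓝 ⟨Qlim, hQ⟩) :=
    ProbabilityMeasure.tendsto_iff_forall_integral_tendsto.2 fun f =>
      hweak f f.continuous ⟨‖f‖, f.norm_coe_le_norm⟩
  have hpow : Continuous fun x : ℝ => |x| ^ p :=
    continuous_abs.rpow_const fun _ => Or.inr (zero_le_one.trans hp)
  refine ⟨fun n => quantile (Q n), quantile Qlim, fun n => measurable_quantile _,
    measurable_quantile _, fun n => map_quantile _, map_quantile _, ?_⟩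
  refine tendsto_integral_rpow_abs_sub_of_tendsto_ae (zero_lt_one.trans_le hp)
    (fun n => (measurable_quantile _).aemeasurable) (measurable_quantile _).aemeasurable
    (fun n => (hQnmom n).comp_quantile) hQmom.comp_quantile
    (ae_tendsto_quantile fun x hx => tendsto_cdf_of_tendsto hconv hx) ?_
  simpa only [fun n => integral_comp_quantile (Q n) hpow.aestronglyMeasurable,
    integral_comp_quantile Qlim hpow.aestronglyMeasurable] using hmom
end
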